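/- arXiv:2208.03025 — 7 statements merged into one kernel-verified Lean document; each statement's English description precedes it below -/
import Mathlib

section
/- Let X₁, X₂ ⊆ ℝ^d be nonempty compact convex sets, let h : ℝ^d → ℝ be strictly convex and differentiable, define the cost c(x₁, x₂) = h(x₁ − x₂), let g : X₂ → ℝ be continuous, and set f(x₁) = inf_{x₂ ∈ X₂} [c(x₁, x₂) − g(x₂)]. Suppose x₁ is a point of the interior of X₁ at which f is differentiable, and suppose y₀ ∈ X₂ is a minimizer of y ↦ c(x₁, y) − g(y) over X₂ lying in the interior of X₂. Then ∇h(x₁ − y₀) = ∇f(x₁), and y₀ is the unique minimizer of y ↦ c(x₁, y) − g(y) over X₂; in other words, y₀ = x₁ − (∇h)⁻¹(∇f(x₁)) is the unique pre-image of x₁ under the c-superdifferential of g. -/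
/-!
If `y` attains the infimum defining `f = g^c` at `x₁`, then `x ↦ c(x, y) - g(y) - f(x)` is
nonnegative and vanishes at `x₁`, so where `f` is differentiable the first-order condition
gives `∇h(x₁ - y) = ∇f(x₁)`. This holds for every minimizer `y`, and `∇h` is injective
because `h` is strictly convex, so all minimizers coincide.
-/

open Set

theorem StrictConvexOn.comp_affineMap {𝕜 E F β : Type*} [Field 𝕜] [LinearOrder 𝕜]
    [AddCommGroup E] [AddCommGroup F] [AddCommMonoid β] [PartialOrder β]
    [Module 𝕜 E] [Module 𝕜 F] [SMul 𝕜 β] {f : F → β} {g : E →ᵃ[𝕜] F}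
    (hg : Function.Injective g) {s : Set F} (hf : StrictConvexOn 𝕜 s f) :
    StrictConvexOn 𝕜 (g ⁻¹' s) (f ∘ g) :=
  ⟨hf.1.affine_preimage _, fun x hx y hy hxy a b ha hb hab =>
    calc
      (f ∘ g) (a • x + b • y) = f (a • g x + b • g y) := by
        rw [Function.comp_apply, Convex.combo_affine_apply hab]
      _ < a • f (g x) + b • f (g y) := hf.2 hx hy (hg.ne hxy) ha hb hab⟩

section CTransform

variable {E : Type*} [NormedAddCommGroup E]

/-- `g^c` for the cost `c(x, y) = h(x - y)`. -/
noncomputable def cTransform (h : E → ℝ) (X : Set E) (g : E → ℝ) (x : E) : ℝ :=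
  ⨅ y : X, (h (x - y) - g y)

theorem cTransform_le {h g : E → ℝ} {X : Set E} (hX : IsCompact X) (hh : Continuous h)
    (hg : ContinuousOn g X) (x : E) {y : E} (hy : y ∈ X) :
    cTransform h X g x ≤ h (x - y) - g y := by
  have hcont : ContinuousOn (fun z => h (x - z) - g z) X :=
    (hh.comp (continuous_const.sub continuous_id)).continuousOn.sub hg
  have hbdd := hX.bddBelow_image hcont
  rw [image_eq_range] at hbdd
  exact ciInf_le hbdd ⟨y, hy⟩

variable [NormedSpace ℝ E]

theorem StrictConvexOn.fderiv_injective {h : E → ℝ} (hconv : StrictConvexOn ℝ univ h)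
    (hdiff : Differentiable ℝ h) : Function.Injective (fderiv ℝ h) := by
  intro a b hab
  by_contra hne
  set q : ℝ → ℝ := h ∘ AffineMap.lineMap a b
  have hq : ∀ t, HasDerivAt q (fderiv ℝ h (AffineMap.lineMap a b t) (b - a)) t := fun t =>
    (hdiff _).hasFDerivAt.comp_hasDerivAt t AffineMap.hasDerivAt_lineMap
  have hqconv : StrictConvexOn ℝ univ q :=
    hconv.comp_affineMap (AffineMap.lineMap_injective ℝ hne)
  have hlt := hqconv.strictMonoOn_deriv (fun t _ => (hq t).differentiableAt)
    (mem_univ 0) (mem_univ 1) one_pos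
  rw [(hq 0).deriv, (hq 1).deriv, AffineMap.lineMap_apply_zero, AffineMap.lineMap_apply_one,
    hab] at hlt
  exact lt_irrefl _ hlt

theorem HasFDerivAt.eq_of_eventually_le_of_eq {f φ : E → ℝ} {f' φ' : E →L[ℝ] ℝ} {x : E}
    (hf : HasFDerivAt f f' x) (hφ : HasFDerivAt φ φ' x) (hle : ∀ᶠ z in nhds x, f z ≤ φ z)
    (heq : f x = φ x) : f' = φ' := by
  have hmin : IsLocalMin (φ - f) x := by
    filter_upwards [hle] with z hz
    simpa [heq] using hz
  exact (sub_eq_zero.1 (hmin.hasFDerivAt_eq_zero (hφ.sub hf))).symm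

theorem fderiv_comp_sub_eq_fderiv_cTransform {h g : E → ℝ} {X : Set E} (hX : IsCompact X)
    (hh : Differentiable ℝ h) (hg : ContinuousOn g X) {x y : E} (hy : y ∈ X)
    (hfd : DifferentiableAt ℝ (cTransform h X g) x)
    (hmin : cTransform h X g x = h (x - y) - g y) :
    fderiv ℝ h (x - y) = fderiv ℝ (cTransform h X g) x := by
  have hφ : HasFDerivAt (fun z => h (z - y) - g y) (fderiv ℝ h (x - y)) x := by
    simpa using ((hh (x - y)).hasFDerivAt.comp x ((hasFDerivAt_id x).sub_const y)).sub_const (g y)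
  exact (hfd.hasFDerivAt.eq_of_eventually_le_of_eq hφ
    (Filter.Eventually.of_forall fun z => cTransform_le hX hh.continuous hg z hy) hmin).symm

end CTransform

theorem stmt5_general {d : ℕ} (X₂ : Set (EuclideanSpace ℝ (Fin d)))
    (hX₂c : IsCompact X₂)
    (h : EuclideanSpace ℝ (Fin d) → ℝ)
    (hconv : StrictConvexOn ℝ Set.univ h) (hdiff : Differentiable ℝ h)
    (g : EuclideanSpace ℝ (Fin d) → ℝ) (hg : ContinuousOn g X₂)
    (x₁ : EuclideanSpace ℝ (Fin d))
    (hfd : DifferentiableAt ℝ (fun x => ⨅ y : X₂, (h (x - y) - g y)) x₁)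
    (y₀ : EuclideanSpace ℝ (Fin d)) (hy₀ : y₀ ∈ interior X₂)
    (hy₀min : ∀ y ∈ X₂, h (x₁ - y₀) - g y₀ ≤ h (x₁ - y) - g y) :
    gradient h (x₁ - y₀) = gradient (fun x => ⨅ y : X₂, (h (x - y) - g y)) x₁ ∧
    (∀ y ∈ X₂, (∀ y' ∈ X₂, h (x₁ - y) - g y ≤ h (x₁ - y') - g y') → y = y₀) := by
  change gradient h (x₁ - y₀) = gradient (cTransform h X₂ g) x₁ ∧ _
  have hy₀X₂ : y₀ ∈ X₂ := interior_subset hy₀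
  have : Nonempty X₂ := ⟨⟨y₀, hy₀X₂⟩⟩
  have hf₀ : cTransform h X₂ g x₁ = h (x₁ - y₀) - g y₀ :=
    le_antisymm (cTransform_le hX₂c hdiff.continuous hg x₁ hy₀X₂)
      (le_ciInf fun y => hy₀min y y.2)
  have hgrad₀ := fderiv_comp_sub_eq_fderiv_cTransform hX₂c hdiff hg hy₀X₂ hfd hf₀
  refine ⟨congrArg _ hgrad₀, fun y hy hymin => ?_⟩
  have hf : cTransform h X₂ g x₁ = h (x₁ - y) - g y :=
    hf₀.trans (le_antisymm (hy₀min y hy) (hymin y₀ hy₀X₂))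
  have hgrad := fderiv_comp_sub_eq_fderiv_cTransform hX₂c hdiff hg hy hfd hf
  exact sub_right_injective (hconv.fderiv_injective hdiff (hgrad.trans hgrad₀.symm))

/-- For `c(x₁,x₂) = h(x₁−x₂)` with `h` strictly convex and differentiable,
`g` continuous on the compact convex set `X₂`, and `f = g^c`, if `f` is differentiable at an
interior point `x₁` of `X₁` and `y₀` is an interior minimizer of `y ↦ c(x₁,y) − g(y)` over
`X₂`, then `∇h(x₁ − y₀) = ∇f(x₁)` and `y₀` is the unique minimizer over `X₂`. -/
theorem stmt5 {d : ℕ} (X₁ X₂ : Set (EuclideanSpace ℝ (Fin d)))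
    (hX₁ne : X₁.Nonempty) (hX₂ne : X₂.Nonempty)
    (hX₁c : IsCompact X₁) (hX₂c : IsCompact X₂)
    (hX₁conv : Convex ℝ X₁) (hX₂conv : Convex ℝ X₂)
    (h : EuclideanSpace ℝ (Fin d) → ℝ)
    (hconv : StrictConvexOn ℝ Set.univ h) (hdiff : Differentiable ℝ h)
    (g : EuclideanSpace ℝ (Fin d) → ℝ) (hg : ContinuousOn g X₂)
    (x₁ : EuclideanSpace ℝ (Fin d)) (hx₁ : x₁ ∈ interior X₁)
    (hfd : DifferentiableAt ℝ (fun x => ⨅ y : X₂, (h (x - y) - g y)) x₁)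
    (y₀ : EuclideanSpace ℝ (Fin d)) (hy₀ : y₀ ∈ interior X₂)
    (hy₀min : ∀ y ∈ X₂, h (x₁ - y₀) - g y₀ ≤ h (x₁ - y) - g y) :
    gradient h (x₁ - y₀) = gradient (fun x => ⨅ y : X₂, (h (x - y) - g y)) x₁ ∧
    (∀ y ∈ X₂, (∀ y' ∈ X₂, h (x₁ - y) - g y ≤ h (x₁ - y') - g y') → y = y₀) :=
  stmt5_general X₂ hX₂c h hconv hdiff g hg x₁ hfd y₀ hy₀ hy₀min
end

section
/- Let X₁, …, X_m be Polish spaces (standard Borel spaces) with Borel probability measures μ_i on X_i, and fix j ∈ {1, …, m}. Let Q be a Borel probability measure on X₁ × ⋯ × X_m × X_j such that: (i) for each i ∈ {1, …, m} with i ≠ j, the i-th coordinate pushforward of Q equals μ_i; and (ii) the pushforward of Q under the pair of coordinates (x_j, x_{m+1}) equals the pushforward of μ_j under the diagonal map x ↦ (x, x). Then there exists a Borel probability measure P on X₁ × ⋯ × X_m with i-th coordinate pushforward equal to μ_i for every i ∈ {1, …, m}, such that T_# P = Q, where T(x₁, …, x_m) = (x₁, …, x_m, x_j). -/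
open MeasureTheory

/-- (Inclusion 𝒬₁ ⊆ 𝒬₂, via the generalized gluing lemma.) For Polish spaces
`X i` with Borel probability measures `μ i`, if a Borel probability measure `Q` on
`(Π i, X i) × X j` has `i`-th coordinate pushforward `μ i` for every `i ≠ j` and its
`(j, m+1)` joint pushforward equals the diagonal pushforward `(id,id)_# μ j`, then there is
`P ∈ Γ(μ₁,…,μ_m)` with `T_# P = Q` for the duplication map `T(x) = (x, x j)`. -/
theorem stmt11 {m : ℕ} (X : Fin m → Type*)
    [∀ i, TopologicalSpace (X i)] [∀ i, PolishSpace (X i)]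
    [∀ i, MeasurableSpace (X i)] [∀ i, BorelSpace (X i)]
    (μ : (i : Fin m) → Measure (X i)) [∀ i, IsProbabilityMeasure (μ i)]
    (j : Fin m)
    (Q : Measure (((i : Fin m) → X i) × X j)) [IsProbabilityMeasure Q]
    (hQ1 : ∀ i, i ≠ j → Q.map (fun q => q.1 i) = μ i)
    (hQ2 : Q.map (fun q => (q.1 j, q.2)) = (μ j).map (fun x => (x, x))) :
    ∃ P : Measure ((i : Fin m) → X i), IsProbabilityMeasure P ∧
      (∀ i, P.map (fun x => x i) = μ i) ∧
      P.map (fun x => (x, x j)) = Q := by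
  have hmfst : Measurable (fun q : ((i : Fin m) → X i) × X j => q.1) := measurable_fst
  have hmj : Measurable (fun q : ((i : Fin m) → X i) × X j => (q.1 j, q.2)) :=
    ((measurable_pi_apply j).comp measurable_fst).prodMk measurable_snd
  have hdiag : MeasurableSet {p : X j × X j | p.1 = p.2} :=
    isClosed_diagonal.measurableSet
  have hm2 : Measurable (fun x : X j => (x, x)) := measurable_id.prodMk measurable_id
  have hT : Measurable (fun x : (i : Fin m) → X i => (x, x j)) :=
    measurable_id.prodMk (measurable_pi_apply j)
  -- Q-a.e., q.1 j = q.2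
  have hae : ∀ᵐ q ∂Q, (fun q : ((i : Fin m) → X i) × X j => q.1 j) q = q.2 := by
    have hms : MeasurableSet {q : ((i : Fin m) → X i) × X j | q.1 j = q.2} := hmj hdiag
    have h1 : Q {q | q.1 j = q.2} = 1 := by
      have h := congrArg (fun ν : Measure (X j × X j) => ν {p | p.1 = p.2}) hQ2
      rw [Measure.map_apply hmj hdiag,
        Measure.map_apply hm2 hdiag] at h
      have h2 : (fun x : X j => (x, x)) ⁻¹' {p : X j × X j | p.1 = p.2} = Set.univ := by
        ext x; simp
      rw [h2, measure_univ] at h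
      exact h
    have h0 : Q {q : ((i : Fin m) → X i) × X j | q.1 j = q.2}ᶜ = 0 := by
      have := measure_compl hms (measure_ne_top Q _)
      rw [h1, measure_univ] at this
      simpa using this
    exact h0
  refine ⟨Q.map (fun q => q.1), ?_, ?_, ?_⟩
  · exact Measure.isProbabilityMeasure_map hmfst.aemeasurable
  · intro i
    rw [Measure.map_map (measurable_pi_apply i) hmfst]
    by_cases hij : i = j
    · subst hij
      have h3 : Q.map ((fun x : (i : Fin m) → X i => x i) ∘ fun q => q.1)
          = (Q.map (fun q => (q.1 i, q.2))).map Prod.fst := by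
        rw [Measure.map_map measurable_fst hmj]
        rfl
      rw [h3, hQ2, Measure.map_map measurable_fst hm2]
      exact Measure.map_id'.trans rfl
    · exact hQ1 i hij
  · rw [Measure.map_map hT hmfst]
    have heq : (fun q : ((i : Fin m) → X i) × X j => (q.1, q.1 j)) =ᵐ[Q] id := by
      filter_upwards [hae] with q hq
      simp [hq, Prod.ext_iff]
    calc Q.map ((fun x => (x, x j)) ∘ fun q => q.1) = Q.map id := Measure.map_congr heq
      _ = Q := Measure.map_id
end

section
/- Let X₁, …, X_m be Polish spaces with Borel probability measures μ_i, fix indices i₀ ≠ j in {1, …, m}, let d : X₁ × ⋯ × X_m → ℝ and c_{i₀ j} : X_{i₀} × X_j → ℝ be bounded continuous, and set c(x₁, …, x_m) = c_{i₀ j}(x_{i₀}, x_j) + d(x₁, …, x_m) and c̃(x₁, …, x_m, x_{m+1}) = c_{i₀ j}(x_{i₀}, x_{m+1}) + d(x₁, …, x_m), where x_{m+1} ranges over X_j. Let 𝒬₁ denote the set of Borel probability measures Q on X₁ × ⋯ × X_m × X_j such that the i-th coordinate pushforward of Q equals μ_i for all i ∉ {j, m+1} and the pushforward of Q under the coordinate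 pair (x_j, x_{m+1}) equals (id, id)_# μ_j. Then the infimum of ∫ c dP over P ∈ Γ(μ₁, …, μ_m) equals the infimum of ∫ c̃ dQ over Q ∈ 𝒬₁. -/
open MeasureTheory

private lemma pi_map_eval' {ι : Type*} [Fintype ι] [DecidableEq ι] (α : ι → Type*)
    [∀ i, MeasurableSpace (α i)]
    (μ : (i : ι) → Measure (α i)) [∀ i, IsProbabilityMeasure (μ i)] (i : ι) :
    (Measure.pi μ).map (fun x => x i) = μ i := by
  ext s hs
  rw [Measure.map_apply (measurable_pi_apply i) hs, Set.eval_preimage,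
    Measure.pi_pi]
  rw [Finset.prod_eq_single i (fun k _ hk => by simp [Function.update_of_ne hk])
    (by simp)]
  simp

private lemma integrable_of_bdd {α : Type*} [MeasurableSpace α]
    {ν : Measure α} [IsProbabilityMeasure ν] {f : α → ℝ}
    (hf : AEStronglyMeasurable f ν) {C : ℝ} (hC : ∀ x, |f x| ≤ C) :
    Integrable f ν :=
  ⟨hf, HasFiniteIntegral.of_bounded (C := C) (Filter.Eventually.of_forall fun x => hC x)⟩

/-- (One-step unrolling identity, part (a).) For Polish spaces `X i` with Borel
probability measures `μ i`, bounded continuous `d₀ : Π X i → ℝ` and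
`cij : X i₀ × X j → ℝ`, with `c(x) = cij(x i₀, x j) + d₀(x)` and
`c̃(x, x') = cij(x i₀, x') + d₀(x)`, the MMOT value over `Γ(μ₁,…,μ_m)` equals the infimum
over the constrained set `𝒬₁` of measures on `(Π X i) × X j` whose coordinates `i ∉ {j,m+1}`
push forward to `μ i` and whose `(j, m+1)` joint pushforward is `(id,id)_# μ j`. -/
theorem stmt12 {m : ℕ} (X : Fin m → Type*)
    [∀ i, TopologicalSpace (X i)] [∀ i, PolishSpace (X i)]
    [∀ i, MeasurableSpace (X i)] [∀ i, BorelSpace (X i)]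
    (μ : (i : Fin m) → Measure (X i)) [∀ i, IsProbabilityMeasure (μ i)]
    (i₀ j : Fin m) (hij : i₀ ≠ j)
    (d₀ : ((i : Fin m) → X i) → ℝ) (hd₀ : Continuous d₀) (hd₀b : ∃ M, ∀ x, |d₀ x| ≤ M)
    (cij : X i₀ → X j → ℝ)
    (hcij : Continuous fun p : X i₀ × X j => cij p.1 p.2)
    (hcijb : ∃ M, ∀ x y, |cij x y| ≤ M) :
    (⨅ P : {P : Measure ((i : Fin m) → X i) //
        IsProbabilityMeasure P ∧ ∀ i, P.map (fun x => x i) = μ i},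
      ∫ x, (cij (x i₀) (x j) + d₀ x) ∂P.1)
    = ⨅ Q : {Q : Measure (((i : Fin m) → X i) × X j) //
        IsProbabilityMeasure Q ∧ (∀ i, i ≠ j → Q.map (fun q => q.1 i) = μ i) ∧
        Q.map (fun q => (q.1 j, q.2)) = (μ j).map (fun x => (x, x))},
      ∫ q, (cij (q.1 i₀) q.2 + d₀ q.1) ∂Q.1 := by
  obtain ⟨Md, hMd⟩ := hd₀b
  obtain ⟨Mc, hMc⟩ := hcijb
  set C : ℝ := Mc + Md with hC
  -- continuity / measurability of the cost functions
  have hc_cont : Continuous fun x : (i : Fin m) → X i => cij (x i₀) (x j) + d₀ x := by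
    exact (hcij.comp ((continuous_apply i₀).prodMk (continuous_apply j))).add hd₀
  have hct_cont : Continuous fun q : ((i : Fin m) → X i) × X j =>
      cij (q.1 i₀) q.2 + d₀ q.1 := by
    exact (hcij.comp (((continuous_apply i₀).comp continuous_fst).prodMk
      continuous_snd)).add (hd₀.comp continuous_fst)
  have hc2_cont : Continuous fun q : ((i : Fin m) → X i) × X j =>
      cij (q.1 i₀) (q.1 j) + d₀ q.1 := hc_cont.comp continuous_fst
  have hcB : ∀ x : (i : Fin m) → X i, |cij (x i₀) (x j) + d₀ x| ≤ C := fun x =>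
    (abs_add_le _ _).trans (add_le_add (hMc _ _) (hMd _))
  have hctB : ∀ q : ((i : Fin m) → X i) × X j, |cij (q.1 i₀) q.2 + d₀ q.1| ≤ C := fun q =>
    (abs_add_le _ _).trans (add_le_add (hMc _ _) (hMd _))
  -- measurable maps
  have hg : Measurable fun x : (i : Fin m) → X i => (x, x j) :=
    measurable_id.prodMk (measurable_pi_apply j)
  have hfst : Measurable fun q : ((i : Fin m) → X i) × X j => q.1 := measurable_fst
  have hgj : Measurable fun q : ((i : Fin m) → X i) × X j => (q.1 j, q.2) :=
    ((measurable_pi_apply j).comp measurable_fst).prodMk measurable_snd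
  -- nonemptiness: the product measure and its lift
  have hPpi : ∀ i, (Measure.pi μ).map (fun x => x i) = μ i := fun i => pi_map_eval' X μ i
  haveI : IsProbabilityMeasure (Measure.pi μ) := inferInstance
  have hQ0 : IsProbabilityMeasure ((Measure.pi μ).map (fun x => (x, x j))) :=
    Measure.isProbabilityMeasure_map hg.aemeasurable
  -- generic: from P ∈ Γ build Q ∈ 𝒬₁
  have lift_mem : ∀ P : Measure ((i : Fin m) → X i), IsProbabilityMeasure P →
      (∀ i, P.map (fun x => x i) = μ i) →
      (IsProbabilityMeasure (P.map (fun x => (x, x j))) ∧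
        (∀ i, i ≠ j → (P.map (fun x => (x, x j))).map (fun q => q.1 i) = μ i) ∧
        (P.map (fun x => (x, x j))).map (fun q => (q.1 j, q.2))
          = (μ j).map (fun x => (x, x))) := by
    intro P hP hPm
    refine ⟨Measure.isProbabilityMeasure_map hg.aemeasurable, ?_, ?_⟩
    · intro i _
      rw [Measure.map_map (show Measurable fun q : ((k : Fin m) → X k) × X j => q.1 i from
        (measurable_pi_apply i).comp measurable_fst) hg]
      exact hPm i
    · rw [Measure.map_map hgj hg, ← hPm j,
        Measure.map_map (show Measurable fun x : X j => (x, x) from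
          measurable_id.prodMk measurable_id) (measurable_pi_apply j)]
      rfl
  haveI hne1 : Nonempty {P : Measure ((i : Fin m) → X i) //
      IsProbabilityMeasure P ∧ ∀ i, P.map (fun x => x i) = μ i} :=
    ⟨⟨Measure.pi μ, inferInstance, hPpi⟩⟩
  haveI hne2 : Nonempty {Q : Measure (((i : Fin m) → X i) × X j) //
      IsProbabilityMeasure Q ∧ (∀ i, i ≠ j → Q.map (fun q => q.1 i) = μ i) ∧
      Q.map (fun q => (q.1 j, q.2)) = (μ j).map (fun x => (x, x))} :=
    ⟨⟨(Measure.pi μ).map (fun x => (x, x j)), lift_mem _ inferInstance hPpi⟩⟩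
  -- boundedness below of both families of integrals
  have bdd1 : BddBelow (Set.range fun P : {P : Measure ((i : Fin m) → X i) //
      IsProbabilityMeasure P ∧ ∀ i, P.map (fun x => x i) = μ i} =>
      ∫ x, (cij (x i₀) (x j) + d₀ x) ∂P.1) := by
    refine ⟨-C, ?_⟩
    rintro r ⟨P, rfl⟩
    haveI := P.2.1
    have := norm_integral_le_of_norm_le_const (μ := P.1)
      (f := fun x => cij (x i₀) (x j) + d₀ x) (C := C)
      (Filter.Eventually.of_forall fun x => by simpa using hcB x)
    linarith [(abs_le.1 (by simpa [Real.norm_eq_abs] using this)).1]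
  have bdd2 : BddBelow (Set.range fun Q : {Q : Measure (((i : Fin m) → X i) × X j) //
      IsProbabilityMeasure Q ∧ (∀ i, i ≠ j → Q.map (fun q => q.1 i) = μ i) ∧
      Q.map (fun q => (q.1 j, q.2)) = (μ j).map (fun x => (x, x))} =>
      ∫ q, (cij (q.1 i₀) q.2 + d₀ q.1) ∂Q.1) := by
    refine ⟨-C, ?_⟩
    rintro r ⟨Q, rfl⟩
    haveI := Q.2.1
    have := norm_integral_le_of_norm_le_const (μ := Q.1)
      (f := fun q => cij (q.1 i₀) q.2 + d₀ q.1) (C := C)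
      (Filter.Eventually.of_forall fun q => by simpa using hctB q)
    linarith [(abs_le.1 (by simpa [Real.norm_eq_abs] using this)).1]
  apply le_antisymm
  · -- LHS ≤ RHS : from each Q build P = fst_# Q
    refine le_ciInf fun Q => ?_
    obtain ⟨Q, hQp, hQm, hQd⟩ := Q
    haveI := hQp
    -- marginals of P := Q.map fst
    have hPm : ∀ i, (Q.map (fun q => q.1)).map (fun x => x i) = μ i := by
      intro i
      rw [Measure.map_map (measurable_pi_apply i) hfst]
      by_cases hi : i = j
      · subst hi
        have h1 : Q.map (fun q => q.1 i) =
            ((μ i).map (fun x => (x, x))).map Prod.fst := by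
          rw [← hQd, Measure.map_map measurable_fst hgj]; rfl
        have h2 : ((μ i).map (fun x => (x, x))).map Prod.fst = μ i := by
          rw [Measure.map_map measurable_fst (show Measurable fun x : X i => (x, x) from
            measurable_id.prodMk measurable_id)]
          exact Measure.map_id'
        exact h1.trans h2
      · exact hQm i hi
    haveI hPp : IsProbabilityMeasure (Q.map (fun q => q.1)) :=
      Measure.isProbabilityMeasure_map hfst.aemeasurable
    -- a.e. q.1 j = q.2
    have hae : ∀ᵐ q ∂Q, q.1 j = q.2 := by
      have hD : MeasurableSet {p : X j × X j | p.1 = p.2} :=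
        isClosed_diagonal.measurableSet
      have h1 : Q ((fun q => (q.1 j, q.2)) ⁻¹' {p : X j × X j | p.1 = p.2}) = 1 := by
        rw [← Measure.map_apply hgj hD, hQd,
          Measure.map_apply (show Measurable fun x : X j => (x, x) from
            measurable_id.prodMk measurable_id) hD]
        simp
      have : Q {q | q.1 j = q.2} = 1 := h1
      rw [Filter.eventually_iff, mem_ae_iff]
      have hcompl : Q {q | q.1 j = q.2}ᶜ = 0 := by
        rw [measure_compl (by exact hD.preimage hgj) (measure_ne_top Q _), this]
        simp
      simpa using hcompl
    have hint : ∫ x, (cij (x i₀) (x j) + d₀ x) ∂(Q.map (fun q => q.1))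
        = ∫ q, (cij (q.1 i₀) q.2 + d₀ q.1) ∂Q := by
      rw [integral_map hfst.aemeasurable hc_cont.aestronglyMeasurable]
      exact integral_congr_ae (hae.mono fun q hq => by simp [hq])
    exact ciInf_le_of_le bdd1 ⟨Q.map (fun q => q.1), hPp, hPm⟩ (le_of_eq hint)
  · -- RHS ≤ LHS : from each P build Q = (id, eval j)_# P
    refine le_ciInf fun P => ?_
    obtain ⟨P, hPp, hPm⟩ := P
    haveI := hPp
    have hint : ∫ q, (cij (q.1 i₀) q.2 + d₀ q.1) ∂(P.map (fun x => (x, x j)))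
        = ∫ x, (cij (x i₀) (x j) + d₀ x) ∂P := by
      rw [integral_map hg.aemeasurable hct_cont.aestronglyMeasurable]
    exact ciInf_le_of_le bdd2 ⟨P.map (fun x => (x, x j)), lift_mem P hPp hPm⟩
      (le_of_eq hint)
end

section
/- Let X₁, …, X_m be Polish spaces with Borel probability measures μ_i, fix indices i₀ ≠ j in {1, …, m}, let d : X₁ × ⋯ × X_m → ℝ and c_{i₀ j} : X_{i₀} × X_j → ℝ be bounded continuous, and set c(x₁, …, x_m) = c_{i₀ j}(x_{i₀}, x_j) + d(x₁, …, x_m) and c̃(x₁, …, x_m, x_{m+1}) = c_{i₀ j}(x_{i₀}, x_{m+1}) + d(x₁, …, x_m), where x_{m+1} ranges over X_j. Then inf_{P ∈ Γ(μ₁, …, μ_m)} ∫ c dP ≥ inf_{Q ∈ Γ(μ₁, …, μ_m, μ_j)} ∫ c̃ dQ, where Γ(μ₁, …, μ_m, μ_j) is the set of probability measures on X₁ × ⋯ × X_m × X_j with coordinate pushforwards μ₁, …, μ_m, μ_j. That is, the unrolled MMOT with the duplicated marginal (but without the diagonal constraint) provides a lower bound on the original MMOT value. -/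
open MeasureTheory Set

/-! Push a coupling `P` of `μ₁, …, μ_m` forward along the graph map `x ↦ (x, x_j)`. The result is
a coupling of `μ₁, …, μ_m, μ_j` concentrated on the diagonal `x_{m+1} = x_j`, where the two costs
agree; since the graph map is a measurable embedding (the diagonal of the Polish space `X_j` is
Borel), the costs have the same integral, whatever the integrand. Boundedness of the costs makes
the unrolled infimum a genuine one rather than the junk value `0` of an unbounded `⨅` in `ℝ`. -/

theorem measurableEmbedding_graph {α β : Type*} [MeasurableSpace α] [MeasurableSpace β]
    [MeasurableEq β] {g : α → β} (hg : Measurable g) :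
    MeasurableEmbedding fun x => (x, g x) := by
  refine .of_measurable_inverse (measurable_id.prodMk hg) ?_ measurable_fst fun _ => rfl
  have hrange : range (fun x => (x, g x)) = {q : α × β | g q.1 = q.2} := by
    ext ⟨x, y⟩
    simp [eq_comm]
  rw [hrange]
  exact measurableSet_eq_fun (hg.comp measurable_fst) measurable_snd

theorem neg_le_integral_of_abs_le {α : Type*} [MeasurableSpace α] (μ : Measure α)
    [IsProbabilityMeasure μ] {f : α → ℝ} {C : ℝ} (hf : ∀ x, |f x| ≤ C) :
    -C ≤ ∫ x, f x ∂μ := by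
  have h := norm_integral_le_of_norm_le_const (μ := μ) (f := f) (.of_forall hf)
  rw [probReal_univ, mul_one, Real.norm_eq_abs] at h
  exact (abs_le.1 h).1

theorem stmt13_general {m : ℕ} (X : Fin m → Type*)
    [∀ i, TopologicalSpace (X i)] [∀ i, PolishSpace (X i)]
    [∀ i, MeasurableSpace (X i)] [∀ i, BorelSpace (X i)]
    (μ : (i : Fin m) → Measure (X i)) [∀ i, IsProbabilityMeasure (μ i)]
    (i₀ j : Fin m)
    (d₀ : ((i : Fin m) → X i) → ℝ) (hd₀b : ∃ M, ∀ x, |d₀ x| ≤ M)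
    (cij : X i₀ → X j → ℝ)
    (hcijb : ∃ M, ∀ x y, |cij x y| ≤ M) :
    (⨅ P : {P : Measure ((i : Fin m) → X i) //
        IsProbabilityMeasure P ∧ ∀ i, P.map (fun x => x i) = μ i},
      ∫ x, (cij (x i₀) (x j) + d₀ x) ∂P.1)
    ≥ ⨅ Q : {Q : Measure (((i : Fin m) → X i) × X j) //
        IsProbabilityMeasure Q ∧ (∀ i, Q.map (fun q => q.1 i) = μ i) ∧
        Q.map (fun q => q.2) = μ j},
      ∫ q, (cij (q.1 i₀) q.2 + d₀ q.1) ∂Q.1 := by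
  obtain ⟨M, hM⟩ := hd₀b
  obtain ⟨M', hM'⟩ := hcijb
  have : Nonempty {P : Measure ((i : Fin m) → X i) //
      IsProbabilityMeasure P ∧ ∀ i, P.map (fun x => x i) = μ i} :=
    ⟨⟨Measure.pi μ, inferInstance, fun i => (measurePreserving_eval μ i).map_eq⟩⟩
  refine ciInf_mono_of_forall_exists ⟨-(M' + M), forall_mem_range.2 fun Q => ?_⟩ fun P => ?_
  · have := Q.2.1
    exact neg_le_integral_of_abs_le _ fun q => (abs_add_le _ _).trans (add_le_add (hM' _ _) (hM _))
  obtain ⟨P, hPprob, hPmarg⟩ := P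
  have hlift : Measurable fun x : (i : Fin m) → X i => (x, x j) :=
    measurable_id.prodMk (measurable_pi_apply j)
  refine ⟨⟨P.map fun x => (x, x j), Measure.isProbabilityMeasure_map hlift.aemeasurable,
    fun i => ?_, ?_⟩, ?_⟩
  · exact (Measure.map_map ((measurable_pi_apply i).comp measurable_fst) hlift).trans (hPmarg i)
  · exact (Measure.map_map measurable_snd hlift).trans (hPmarg j)
  · exact ((measurableEmbedding_graph (measurable_pi_apply j)).integral_map _).le

/-- (One-step unrolling lower bound, part (b).) With the notation of the
unrolling construction (`c(x) = cij(x i₀, x j) + d₀(x)`,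
`c̃(x, x') = cij(x i₀, x') + d₀(x)` with `x'` ranging over `X j`), the unrolled MMOT over
`Γ(μ₁,…,μ_m,μ_j)` (the duplicated marginal, without the diagonal constraint) is a lower
bound for the original MMOT over `Γ(μ₁,…,μ_m)`. -/
theorem stmt13 {m : ℕ} (X : Fin m → Type*)
    [∀ i, TopologicalSpace (X i)] [∀ i, PolishSpace (X i)]
    [∀ i, MeasurableSpace (X i)] [∀ i, BorelSpace (X i)]
    (μ : (i : Fin m) → Measure (X i)) [∀ i, IsProbabilityMeasure (μ i)]
    (i₀ j : Fin m) (hij : i₀ ≠ j)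
    (d₀ : ((i : Fin m) → X i) → ℝ) (hd₀ : Continuous d₀) (hd₀b : ∃ M, ∀ x, |d₀ x| ≤ M)
    (cij : X i₀ → X j → ℝ)
    (hcij : Continuous fun p : X i₀ × X j => cij p.1 p.2)
    (hcijb : ∃ M, ∀ x y, |cij x y| ≤ M) :
    (⨅ P : {P : Measure ((i : Fin m) → X i) //
        IsProbabilityMeasure P ∧ ∀ i, P.map (fun x => x i) = μ i},
      ∫ x, (cij (x i₀) (x j) + d₀ x) ∂P.1)
    ≥ ⨅ Q : {Q : Measure (((i : Fin m) → X i) × X j) //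
        IsProbabilityMeasure Q ∧ (∀ i, Q.map (fun q => q.1 i) = μ i) ∧
        Q.map (fun q => q.2) = μ j},
      ∫ q, (cij (q.1 i₀) q.2 + d₀ q.1) ∂Q.1 :=
  stmt13_general X μ i₀ j d₀ hd₀b cij hcijb
end

section
/- Let X₁, X₂, X₃ be Polish spaces with Borel probability measures μ₁, μ₂, μ₃, and let c₁₂ : X₁ × X₂ → ℝ and c₂₃ : X₂ × X₃ → ℝ be bounded continuous (or nonnegative Borel measurable). Then the multimarginal optimal transport value decomposes along the chain: inf over P ∈ Γ(μ₁, μ₂, μ₃) of ∫ [c₁₂(x₁, x₂) + c₂₃(x₂, x₃)] dP(x₁, x₂, x₃) equals inf over Q ∈ Γ(μ₁, μ₂) of ∫ c₁₂ dQ plus inf over R ∈ Γ(μ₂, μ₃) of ∫ c₂₃ dR. -/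
/-!
A three-marginal plan projects onto a pair of two-marginal couplings, and the chain cost
integrates to the sum of the two pairwise costs, which gives `≥`. Conversely, two couplings
`Q ∈ Γ(μ₁, μ₂)` and `R ∈ Γ(μ₂, μ₃)` sharing the marginal `μ₂` glue to a three-marginal plan:
disintegrate `R = μ₂ ⊗ κ` along `X₂` and take `Q ⊗ κ`, drawing `x₃` from `κ x₂`. Its pairwise
projections are `Q` and `R`, which gives `≤`.
-/

open MeasureTheory ProbabilityTheory

namespace MeasureTheory.Measure

variable {α β γ : Type*} [MeasurableSpace α] [MeasurableSpace β] [MeasurableSpace γ]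

lemma map_prodMap_snd_compProd_prodMkLeft (Q : Measure (α × β)) [SFinite Q]
    (κ : Kernel β γ) [IsSFiniteKernel κ] :
    (Q ⊗ₘ κ.prodMkLeft α).map (Prod.map Prod.snd id) = Q.snd ⊗ₘ κ := by
  ext s hs
  have hκs : Measurable fun b => κ b (Prod.mk b ⁻¹' s) := Kernel.measurable_kernel_prodMk_left hs
  rw [map_apply (by fun_prop) hs, compProd_apply (hs.preimage (by fun_prop)), compProd_apply hs,
    Measure.snd, lintegral_map hκs measurable_snd]
  rfl

lemma exists_map_eq_and_snd_eq_of_snd_eq_fst [StandardBorelSpace γ] [Nonempty γ]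
    {Q : Measure (α × β)} {R : Measure (β × γ)} [SFinite Q] [IsFiniteMeasure R]
    (h : Q.snd = R.fst) :
    ∃ P : Measure (α × β × γ), P.map (fun x => (x.1, x.2.1)) = Q ∧ P.snd = R := by
  refine ⟨(Q ⊗ₘ R.condKernel.prodMkLeft α).map MeasurableEquiv.prodAssoc, ?_, ?_⟩
  · rw [map_map (by fun_prop) (MeasurableEquiv.measurable _)]
    exact fst_compProd Q _
  · rw [Measure.snd, map_map measurable_snd (MeasurableEquiv.measurable _)]
    exact (map_prodMap_snd_compProd_prodMkLeft Q _).trans (by rw [h, disintegrate])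

end MeasureTheory.Measure

section Couplings

variable {α β γ : Type*} [MeasurableSpace α] [MeasurableSpace β] [MeasurableSpace γ]
  {μ₁ : Measure α} {μ₂ : Measure β} {μ₃ : Measure γ}

def IsCoupling (μ₁ : Measure α) (μ₂ : Measure β) (Q : Measure (α × β)) : Prop :=
  IsProbabilityMeasure Q ∧ Q.map Prod.fst = μ₁ ∧ Q.map Prod.snd = μ₂

def IsCoupling₃ (μ₁ : Measure α) (μ₂ : Measure β) (μ₃ : Measure γ)
    (P : Measure (α × β × γ)) : Prop :=
  IsProbabilityMeasure P ∧ P.map (fun x => x.1) = μ₁ ∧ P.map (fun x => x.2.1) = μ₂ ∧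
    P.map (fun x => x.2.2) = μ₃

lemma isCoupling_prod [IsProbabilityMeasure μ₁] [IsProbabilityMeasure μ₂] :
    IsCoupling μ₁ μ₂ (μ₁.prod μ₂) :=
  ⟨inferInstance, Measure.fst_prod, Measure.snd_prod⟩

lemma IsCoupling₃.isCoupling_map {P : Measure (α × β × γ)} (hP : IsCoupling₃ μ₁ μ₂ μ₃ P) :
    IsCoupling μ₁ μ₂ (P.map fun x => (x.1, x.2.1)) := by
  obtain ⟨hP, h₁, h₂, -⟩ := hP
  have hm : Measurable fun x : α × β × γ => (x.1, x.2.1) := by fun_prop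
  exact ⟨Measure.isProbabilityMeasure_map hm.aemeasurable,
    by rwa [Measure.map_map measurable_fst hm], by rwa [Measure.map_map measurable_snd hm]⟩

lemma IsCoupling₃.isCoupling_snd {P : Measure (α × β × γ)} (hP : IsCoupling₃ μ₁ μ₂ μ₃ P) :
    IsCoupling μ₂ μ₃ P.snd := by
  obtain ⟨hP, -, h₂, h₃⟩ := hP
  exact ⟨inferInstance, by rwa [Measure.snd, Measure.map_map measurable_fst measurable_snd],
    by rwa [Measure.snd, Measure.map_map measurable_snd measurable_snd]⟩

lemma IsCoupling.exists_isCoupling₃ [StandardBorelSpace γ] [Nonempty γ]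
    {Q : Measure (α × β)} {R : Measure (β × γ)} (hQ : IsCoupling μ₁ μ₂ Q)
    (hR : IsCoupling μ₂ μ₃ R) :
    ∃ P, IsCoupling₃ μ₁ μ₂ μ₃ P ∧ P.map (fun x => (x.1, x.2.1)) = Q ∧ P.snd = R := by
  obtain ⟨hQ, hQ₁, hQ₂⟩ := hQ
  obtain ⟨hR, hR₂, hR₃⟩ := hR
  obtain ⟨P, hPQ, hPR⟩ :=
    Measure.exists_map_eq_and_snd_eq_of_snd_eq_fst (hQ₂.trans hR₂.symm)
  have hm : Measurable fun x : α × β × γ => (x.1, x.2.1) := by fun_prop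
  have hP : IsProbabilityMeasure P.snd := hPR ▸ hR
  refine ⟨P, ⟨(Measure.isProbabilityMeasure_map_iff measurable_snd.aemeasurable).1 hP,
    ?_, ?_, ?_⟩, hPQ, hPR⟩
  · rw [← hQ₁, ← hPQ, Measure.map_map measurable_fst hm]; rfl
  · rw [← hR₂, ← hPR, Measure.snd, Measure.map_map measurable_fst measurable_snd]; rfl
  · rw [← hR₃, ← hPR, Measure.snd, Measure.map_map measurable_snd measurable_snd]; rfl

end Couplings

section TransportCost

variable {α β γ : Type*} [MeasurableSpace α] [MeasurableSpace β] [MeasurableSpace γ]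
  {μ₁ : Measure α} {μ₂ : Measure β} {μ₃ : Measure γ}

lemma bddBelow_range_integral_of_abs_le {ι : Type*} {P : ι → Measure α}
    (hP : ∀ i, IsProbabilityMeasure (P i)) {f : α → ℝ} {M : ℝ} (hM : ∀ x, |f x| ≤ M) :
    BddBelow (Set.range fun i => ∫ x, f x ∂P i) := by
  refine ⟨-M, ?_⟩
  rintro _ ⟨i, rfl⟩
  have := norm_integral_le_of_norm_le_const (μ := P i)
    (ae_of_all _ fun x => (Real.norm_eq_abs (f x)).trans_le (hM x))
  simp only [probReal_univ, mul_one, Real.norm_eq_abs] at this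
  exact neg_le_of_abs_le this

lemma integral_comp_add_comp {Ω A B : Type*} [MeasurableSpace Ω] [MeasurableSpace A]
    [MeasurableSpace B] {P : Measure Ω} {φ : Ω → A} {ψ : Ω → B} (hφ : Measurable φ)
    (hψ : Measurable ψ) {f : A → ℝ} {g : B → ℝ} (hf : Integrable f (P.map φ))
    (hg : Integrable g (P.map ψ)) :
    ∫ x, (f (φ x) + g (ψ x)) ∂P = (∫ a, f a ∂P.map φ) + ∫ b, g b ∂P.map ψ := by
  have hfφ : Integrable (fun x => f (φ x)) P := hf.comp_measurable hφ
  have hgψ : Integrable (fun x => g (ψ x)) P := hg.comp_measurable hψ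
  rw [integral_add hfφ hgψ,
    integral_map hφ.aemeasurable hf.1, integral_map hψ.aemeasurable hg.1]

noncomputable def transportCost (μ₁ : Measure α) (μ₂ : Measure β) (c : α × β → ℝ) : ℝ :=
  ⨅ Q : {Q // IsCoupling μ₁ μ₂ Q}, ∫ x, c x ∂Q.1

noncomputable def multimarginalTransportCost (μ₁ : Measure α) (μ₂ : Measure β)
    (μ₃ : Measure γ) (c : α × β × γ → ℝ) : ℝ :=
  ⨅ P : {P // IsCoupling₃ μ₁ μ₂ μ₃ P}, ∫ x, c x ∂P.1

lemma transportCost_le {c : α × β → ℝ} {M : ℝ} (hM : ∀ x, |c x| ≤ M) {Q : Measure (α × β)}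
    (hQ : IsCoupling μ₁ μ₂ Q) : transportCost μ₁ μ₂ c ≤ ∫ x, c x ∂Q :=
  ciInf_le (bddBelow_range_integral_of_abs_le (P := fun Q : {Q // IsCoupling μ₁ μ₂ Q} => Q.1)
    (fun Q => Q.2.1) hM) ⟨Q, hQ⟩

lemma multimarginalTransportCost_le {c : α × β × γ → ℝ} {M : ℝ} (hM : ∀ x, |c x| ≤ M)
    {P : Measure (α × β × γ)} (hP : IsCoupling₃ μ₁ μ₂ μ₃ P) :
    multimarginalTransportCost μ₁ μ₂ μ₃ c ≤ ∫ x, c x ∂P :=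
  ciInf_le (bddBelow_range_integral_of_abs_le
    (P := fun P : {P // IsCoupling₃ μ₁ μ₂ μ₃ P} => P.1) (fun P => P.2.1) hM) ⟨P, hP⟩

lemma integral_chain_cost_eq {c₁₂ : α × β → ℝ} {c₂₃ : β × γ → ℝ}
    (h₁₂ : Measurable c₁₂) (h₂₃ : Measurable c₂₃) {M₁ M₂ : ℝ} (hM₁ : ∀ x, |c₁₂ x| ≤ M₁)
    (hM₂ : ∀ x, |c₂₃ x| ≤ M₂) (P : Measure (α × β × γ)) [IsFiniteMeasure P] :
    ∫ x, (c₁₂ (x.1, x.2.1) + c₂₃ x.2) ∂P =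
      (∫ x, c₁₂ x ∂(P.map fun x => (x.1, x.2.1))) + ∫ x, c₂₃ x ∂P.snd :=
  integral_comp_add_comp (by fun_prop) measurable_snd
    (.of_bound h₁₂.aestronglyMeasurable M₁ (ae_of_all _ hM₁))
    (.of_bound h₂₃.aestronglyMeasurable M₂ (ae_of_all _ hM₂))

theorem multimarginalTransportCost_chain_eq_add [StandardBorelSpace γ]
    [IsProbabilityMeasure μ₁] [IsProbabilityMeasure μ₂] [IsProbabilityMeasure μ₃]
    {c₁₂ : α × β → ℝ} {c₂₃ : β × γ → ℝ} (h₁₂ : Measurable c₁₂) (h₂₃ : Measurable c₂₃)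
    {M₁ M₂ : ℝ} (hM₁ : ∀ x, |c₁₂ x| ≤ M₁) (hM₂ : ∀ x, |c₂₃ x| ≤ M₂) :
    multimarginalTransportCost μ₁ μ₂ μ₃ (fun x => c₁₂ (x.1, x.2.1) + c₂₃ x.2) =
      transportCost μ₁ μ₂ c₁₂ + transportCost μ₂ μ₃ c₂₃ := by
  have : Nonempty γ := μ₃.nonempty_of_neZero
  have hM : ∀ x : α × β × γ, |c₁₂ (x.1, x.2.1) + c₂₃ x.2| ≤ M₁ + M₂ := fun x =>
    (abs_add_le _ _).trans (add_le_add (hM₁ _) (hM₂ _))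
  have hΓ₁₂ : Nonempty {Q // IsCoupling μ₁ μ₂ Q} := ⟨⟨_, isCoupling_prod⟩⟩
  have hΓ₂₃ : Nonempty {R // IsCoupling μ₂ μ₃ R} := ⟨⟨_, isCoupling_prod⟩⟩
  apply le_antisymm
  · refine le_ciInf_add_ciInf fun Q R => ?_
    obtain ⟨P, hP, hPQ, hPR⟩ := Q.2.exists_isCoupling₃ R.2
    calc multimarginalTransportCost μ₁ μ₂ μ₃ (fun x => c₁₂ (x.1, x.2.1) + c₂₃ x.2)
        ≤ ∫ x, (c₁₂ (x.1, x.2.1) + c₂₃ x.2) ∂P := multimarginalTransportCost_le hM hP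
      _ = (∫ x, c₁₂ x ∂Q.1) + ∫ x, c₂₃ x ∂ R.1 := by
        have := hP.1
        rw [integral_chain_cost_eq h₁₂ h₂₃ hM₁ hM₂ P, hPQ, hPR]
  · obtain ⟨P, hP, -⟩ := hΓ₁₂.some.2.exists_isCoupling₃ hΓ₂₃.some.2
    have : Nonempty {P // IsCoupling₃ μ₁ μ₂ μ₃ P} := ⟨⟨P, hP⟩⟩
    refine le_ciInf fun P => ?_
    have := P.2.1
    rw [integral_chain_cost_eq h₁₂ h₂₃ hM₁ hM₂ P.1]
    exact add_le_add (transportCost_le hM₁ P.2.isCoupling_map)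
      (transportCost_le hM₂ P.2.isCoupling_snd)

end TransportCost

theorem stmt16_general {X₁ X₂ X₃ : Type*}
    [TopologicalSpace X₁] [MeasurableSpace X₁] [BorelSpace X₁]
    [TopologicalSpace X₂] [PolishSpace X₂] [MeasurableSpace X₂] [BorelSpace X₂]
    [TopologicalSpace X₃] [PolishSpace X₃] [MeasurableSpace X₃] [BorelSpace X₃]
    (μ₁ : Measure X₁) (μ₂ : Measure X₂) (μ₃ : Measure X₃)
    [IsProbabilityMeasure μ₁] [IsProbabilityMeasure μ₂] [IsProbabilityMeasure μ₃]
    (c₁₂ : X₁ → X₂ → ℝ) (c₂₃ : X₂ → X₃ → ℝ)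
    (hc₁₂ : Continuous fun p : X₁ × X₂ => c₁₂ p.1 p.2)
    (hc₂₃ : Continuous fun p : X₂ × X₃ => c₂₃ p.1 p.2)
    (hc₁₂b : ∃ M, ∀ x y, |c₁₂ x y| ≤ M) (hc₂₃b : ∃ M, ∀ x y, |c₂₃ x y| ≤ M) :
    (⨅ P : {P : Measure (X₁ × X₂ × X₃) // IsProbabilityMeasure P ∧
        P.map (fun x => x.1) = μ₁ ∧ P.map (fun x => x.2.1) = μ₂ ∧
        P.map (fun x => x.2.2) = μ₃},
      ∫ x, (c₁₂ x.1 x.2.1 + c₂₃ x.2.1 x.2.2) ∂P.1)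
    = (⨅ Q : {Q : Measure (X₁ × X₂) // IsProbabilityMeasure Q ∧
          Q.map Prod.fst = μ₁ ∧ Q.map Prod.snd = μ₂},
        ∫ x, c₁₂ x.1 x.2 ∂Q.1)
      + ⨅ R : {R : Measure (X₂ × X₃) // IsProbabilityMeasure R ∧
          R.map Prod.fst = μ₂ ∧ R.map Prod.snd = μ₃},
        ∫ x, c₂₃ x.1 x.2 ∂ R.1 := by
  obtain ⟨M₁, hM₁⟩ := hc₁₂b
  obtain ⟨M₂, hM₂⟩ := hc₂₃b
  exact multimarginalTransportCost_chain_eq_add hc₁₂.measurable hc₂₃.measurable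
    (fun x => hM₁ x.1 x.2) (fun x => hM₂ x.1 x.2)

/-- For Polish spaces with Borel probability measures `μ₁, μ₂, μ₃` and bounded
continuous pairwise costs `c₁₂, c₂₃`, the multimarginal OT value for the chain cost
`c₁₂(x₁,x₂) + c₂₃(x₂,x₃)` decomposes as the sum of the two two-marginal OT values. -/
theorem stmt16 {X₁ X₂ X₃ : Type*}
    [TopologicalSpace X₁] [PolishSpace X₁] [MeasurableSpace X₁] [BorelSpace X₁]
    [TopologicalSpace X₂] [PolishSpace X₂] [MeasurableSpace X₂] [BorelSpace X₂]
    [TopologicalSpace X₃] [PolishSpace X₃] [MeasurableSpace X₃] [BorelSpace X₃]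
    (μ₁ : Measure X₁) (μ₂ : Measure X₂) (μ₃ : Measure X₃)
    [IsProbabilityMeasure μ₁] [IsProbabilityMeasure μ₂] [IsProbabilityMeasure μ₃]
    (c₁₂ : X₁ → X₂ → ℝ) (c₂₃ : X₂ → X₃ → ℝ)
    (hc₁₂ : Continuous fun p : X₁ × X₂ => c₁₂ p.1 p.2)
    (hc₂₃ : Continuous fun p : X₂ × X₃ => c₂₃ p.1 p.2)
    (hc₁₂b : ∃ M, ∀ x y, |c₁₂ x y| ≤ M) (hc₂₃b : ∃ M, ∀ x y, |c₂₃ x y| ≤ M) :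
    (⨅ P : {P : Measure (X₁ × X₂ × X₃) // IsProbabilityMeasure P ∧
        P.map (fun x => x.1) = μ₁ ∧ P.map (fun x => x.2.1) = μ₂ ∧
        P.map (fun x => x.2.2) = μ₃},
      ∫ x, (c₁₂ x.1 x.2.1 + c₂₃ x.2.1 x.2.2) ∂P.1)
    = (⨅ Q : {Q : Measure (X₁ × X₂) // IsProbabilityMeasure Q ∧
          Q.map Prod.fst = μ₁ ∧ Q.map Prod.snd = μ₂},
        ∫ x, c₁₂ x.1 x.2 ∂Q.1)
      + ⨅ R : {R : Measure (X₂ × X₃) // IsProbabilityMeasure R ∧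
          R.map Prod.fst = μ₂ ∧ R.map Prod.snd = μ₃},
        ∫ x, c₂₃ x.1 x.2 ∂ R.1 :=
  stmt16_general μ₁ μ₂ μ₃ c₁₂ c₂₃ hc₁₂ hc₂₃ hc₁₂b hc₂₃b
end

section
/- Let X₁, X₂, X₃ ⊆ ℝ^d be nonempty compact sets with Borel probability measures μ₁, μ₂, μ₃, and let c₁₂ : X₁ × X₂ → ℝ, c₂₃ : X₂ × X₃ → ℝ be continuous; set c(x₁, x₂, x₃) = c₁₂(x₁, x₂) + c₂₃(x₂, x₃). Suppose the pair (u₁, v₁) of bounded measurable functions attains the supremum of ∫ u₁ dμ₁ + ∫ v₁ dμ₂ over all pairs satisfying u₁(x₁) + v₁(x₂) ≤ c₁₂(x₁, x₂), and the pair (u₂, v₂) attains the supremum of ∫ u₂ dμ₂ + ∫ v₂ dμ₃ over all pairs satisfying u₂(x₂) + v₂(x₃) ≤ c₂₃(x₂, x₃). Then the triple (f₁, f₂, f₃) = (u₁, v₁ + u₂, v₂) satisfies f₁(x₁) + f₂(x₂) + f₃(x₃) ≤ c(x₁, x₂, x₃) for all points and attains the supremum of ∫ f₁ dμ₁ + ∫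 f₂ dμ₂ + ∫ f₃ dμ₃ over all bounded measurable triples satisfying this constraint; i.e. it is a Kantorovich potential for the MMOT under cost c. -/
open MeasureTheory

/-- (Combining pairwise optimal prices into an MMOT Kantorovich potential.)
On nonempty compact sets `X₁, X₂, X₃ ⊆ ℝ^d` with Borel probability measures `μ₁, μ₂, μ₃`
and continuous costs `c₁₂, c₂₃`, if the bounded measurable pairs `(u₁, v₁)` and `(u₂, v₂)`
are optimal for the two two-marginal dual problems, then the triple
`(f₁, f₂, f₃) = (u₁, v₁ + u₂, v₂)` is admissible and optimal for the three-marginal dual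
problem with chain cost `c = c₁₂ + c₂₃`. -/
theorem stmt17 {d : ℕ} (X₁ X₂ X₃ : Set (EuclideanSpace ℝ (Fin d)))
    (hX₁ne : X₁.Nonempty) (hX₂ne : X₂.Nonempty) (hX₃ne : X₃.Nonempty)
    (hX₁c : IsCompact X₁) (hX₂c : IsCompact X₂) (hX₃c : IsCompact X₃)
    (μ₁ : Measure ↥X₁) (μ₂ : Measure ↥X₂) (μ₃ : Measure ↥X₃)
    [IsProbabilityMeasure μ₁] [IsProbabilityMeasure μ₂] [IsProbabilityMeasure μ₃]
    (c₁₂ : ↥X₁ → ↥X₂ → ℝ) (c₂₃ : ↥X₂ → ↥X₃ → ℝ)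
    (hc₁₂ : Continuous fun p : ↥X₁ × ↥X₂ => c₁₂ p.1 p.2)
    (hc₂₃ : Continuous fun p : ↥X₂ × ↥X₃ => c₂₃ p.1 p.2)
    (u₁ : ↥X₁ → ℝ) (v₁ : ↥X₂ → ℝ) (u₂ : ↥X₂ → ℝ) (v₂ : ↥X₃ → ℝ)
    (hu₁m : Measurable u₁) (hv₁m : Measurable v₁) (hu₂m : Measurable u₂)
    (hv₂m : Measurable v₂)
    (hu₁b : ∃ M, ∀ x, |u₁ x| ≤ M) (hv₁b : ∃ M, ∀ x, |v₁ x| ≤ M)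
    (hu₂b : ∃ M, ∀ x, |u₂ x| ≤ M) (hv₂b : ∃ M, ∀ x, |v₂ x| ≤ M)
    (hadm₁ : ∀ x₁ x₂, u₁ x₁ + v₁ x₂ ≤ c₁₂ x₁ x₂)
    (hadm₂ : ∀ x₂ x₃, u₂ x₂ + v₂ x₃ ≤ c₂₃ x₂ x₃)
    (hopt₁ : ∀ (u : ↥X₁ → ℝ) (v : ↥X₂ → ℝ), Measurable u → Measurable v →
      (∃ M, ∀ x, |u x| ≤ M) → (∃ M, ∀ x, |v x| ≤ M) →
      (∀ x₁ x₂, u x₁ + v x₂ ≤ c₁₂ x₁ x₂) →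
      ∫ x, u x ∂μ₁ + ∫ x, v x ∂μ₂ ≤ ∫ x, u₁ x ∂μ₁ + ∫ x, v₁ x ∂μ₂)
    (hopt₂ : ∀ (u : ↥X₂ → ℝ) (v : ↥X₃ → ℝ), Measurable u → Measurable v →
      (∃ M, ∀ x, |u x| ≤ M) → (∃ M, ∀ x, |v x| ≤ M) →
      (∀ x₂ x₃, u x₂ + v x₃ ≤ c₂₃ x₂ x₃) →
      ∫ x, u x ∂μ₂ + ∫ x, v x ∂μ₃ ≤ ∫ x, u₂ x ∂μ₂ + ∫ x, v₂ x ∂μ₃) :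
    (∀ x₁ x₂ x₃, u₁ x₁ + (v₁ x₂ + u₂ x₂) + v₂ x₃ ≤ c₁₂ x₁ x₂ + c₂₃ x₂ x₃) ∧
    (∀ (g₁ : ↥X₁ → ℝ) (g₂ : ↥X₂ → ℝ) (g₃ : ↥X₃ → ℝ),
      Measurable g₁ → Measurable g₂ → Measurable g₃ →
      (∃ M, ∀ x, |g₁ x| ≤ M) → (∃ M, ∀ x, |g₂ x| ≤ M) → (∃ M, ∀ x, |g₃ x| ≤ M) →
      (∀ x₁ x₂ x₃, g₁ x₁ + g₂ x₂ + g₃ x₃ ≤ c₁₂ x₁ x₂ + c₂₃ x₂ x₃) →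
      ∫ x, g₁ x ∂μ₁ + ∫ x, g₂ x ∂μ₂ + ∫ x, g₃ x ∂μ₃
        ≤ ∫ x, u₁ x ∂μ₁ + ∫ x, (v₁ x + u₂ x) ∂μ₂ + ∫ x, v₂ x ∂μ₃) := by

  haveI : Nonempty ↥X₃ := hX₃ne.to_subtype
  haveI : CompactSpace ↥X₂ := isCompact_iff_compactSpace.mp hX₂c
  haveI : CompactSpace ↥X₃ := isCompact_iff_compactSpace.mp hX₃c
  -- bound on c₂₃
  obtain ⟨K, hK⟩ : ∃ K, ∀ p : ↥X₂ × ↥X₃, ‖c₂₃ p.1 p.2‖ ≤ K := by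
    obtain ⟨K, hK⟩ := (isCompact_univ (X := ↥X₂ × ↥X₃)).exists_bound_of_continuousOn
      hc₂₃.continuousOn
    exact ⟨K, fun p => hK p (Set.mem_univ p)⟩
  constructor
  · intro x₁ x₂ x₃
    have h1 := hadm₁ x₁ x₂
    have h2 := hadm₂ x₂ x₃
    linarith
  · intro g₁ g₂ g₃ hg₁m hg₂m hg₃m hg₁b hg₂b hg₃b hadm
    obtain ⟨M₃, hM₃⟩ := hg₃b
    obtain ⟨M₂, hM₂⟩ := hg₂b
    set φ : ↥X₂ → ℝ := fun x₂ => ⨅ x₃ : ↥X₃, (c₂₃ x₂ x₃ - g₃ x₃) with hφdef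
    have hbdd : ∀ x₂ : ↥X₂, BddBelow (Set.range fun x₃ : ↥X₃ => c₂₃ x₂ x₃ - g₃ x₃) := by
      intro x₂
      refine ⟨-K - M₃, ?_⟩
      rintro y ⟨x₃, rfl⟩
      show -K - M₃ ≤ c₂₃ x₂ x₃ - g₃ x₃
      have h1 := hK (x₂, x₃)
      have h2 := abs_le.mp (hM₃ x₃)
      have h3 := abs_le.mp (Real.norm_eq_abs _ ▸ h1)
      simp only at h3
      linarith [h3.1, h2.2]
    have hφle : ∀ x₂ x₃, φ x₂ ≤ c₂₃ x₂ x₃ - g₃ x₃ := fun x₂ x₃ =>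
      ciInf_le (hbdd x₂) x₃
    have hφge : ∀ x₂ : ↥X₂, -K - M₃ ≤ φ x₂ := by
      intro x₂
      refine le_ciInf fun x₃ => ?_
      have h1 := hK (x₂, x₃)
      have h2 := abs_le.mp (hM₃ x₃)
      have h3 := abs_le.mp (Real.norm_eq_abs _ ▸ h1)
      simp only at h3
      linarith [h3.1, h2.2]
    have hφb : ∀ x₂, |φ x₂| ≤ K + M₃ := by
      intro x₂
      rw [abs_le]
      constructor
      · linarith [hφge x₂]
      · obtain ⟨x₃⟩ := ‹Nonempty ↥X₃›
        have h1 := hφle x₂ x₃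
        have h2 := hK (x₂, x₃)
        have h3 := abs_le.mp (Real.norm_eq_abs _ ▸ h2)
        have h4 := abs_le.mp (hM₃ x₃)
        simp only at h3
        linarith [h3.2, h4.1]
    have hφm : Measurable φ := by
      have husc : UpperSemicontinuous φ := by
        apply upperSemicontinuous_ciInf (f := fun (x₃ : ↥X₃) (x₂ : ↥X₂) => c₂₃ x₂ x₃ - g₃ x₃)
          (fun x₂ => hbdd x₂)
        intro x₃
        exact ((hc₂₃.comp (continuous_id.prodMk continuous_const)).sub
          continuous_const).upperSemicontinuous
      exact husc.measurable
    -- pair (g₁, g₂ - φ) admissible for c₁₂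
    have key₁ : ∫ x, g₁ x ∂μ₁ + ∫ x, (g₂ x - φ x) ∂μ₂ ≤ ∫ x, u₁ x ∂μ₁ + ∫ x, v₁ x ∂μ₂ := by
      refine hopt₁ g₁ (fun x => g₂ x - φ x) hg₁m (hg₂m.sub hφm) hg₁b
        ⟨M₂ + (K + M₃), fun x => (abs_sub (g₂ x) (φ x)).trans
          (add_le_add (hM₂ x) (hφb x))⟩ ?_
      intro x₁ x₂
      show g₁ x₁ + (g₂ x₂ - φ x₂) ≤ c₁₂ x₁ x₂
      have : g₁ x₁ + g₂ x₂ - c₁₂ x₁ x₂ ≤ φ x₂ := by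
        refine le_ciInf fun x₃ => ?_
        have := hadm x₁ x₂ x₃
        linarith
      linarith
    -- pair (φ, g₃) admissible for c₂₃
    have key₂ : ∫ x, φ x ∂μ₂ + ∫ x, g₃ x ∂μ₃ ≤ ∫ x, u₂ x ∂μ₂ + ∫ x, v₂ x ∂μ₃ := by
      refine hopt₂ φ g₃ hφm hg₃m ⟨K + M₃, hφb⟩ ⟨M₃, hM₃⟩ ?_
      intro x₂ x₃
      have := hφle x₂ x₃
      linarith
    have intof : ∀ {α : Type} [inst : MeasurableSpace α] (μ : Measure α)
        [IsProbabilityMeasure μ] (f : α → ℝ), Measurable f → (∃ M, ∀ x, |f x| ≤ M) →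
        Integrable f μ := by
      intro α inst μ hμ f hfm ⟨M, hM⟩
      exact (integrable_const M).mono' hfm.aestronglyMeasurable
        (Filter.Eventually.of_forall fun x => (Real.norm_eq_abs _) ▸ hM x)
    have hg₂i : Integrable g₂ μ₂ := intof μ₂ g₂ hg₂m ⟨M₂, hM₂⟩
    have hφi : Integrable φ μ₂ := intof μ₂ φ hφm ⟨K + M₃, hφb⟩
    have hv₁i : Integrable v₁ μ₂ := intof μ₂ v₁ hv₁m hv₁b
    have hu₂i : Integrable u₂ μ₂ := intof μ₂ u₂ hu₂m hu₂b
    rw [integral_sub hg₂i hφi] at key₁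
    have hsplit : ∫ x, (v₁ x + u₂ x) ∂μ₂ = ∫ x, v₁ x ∂μ₂ + ∫ x, u₂ x ∂μ₂ :=
      integral_add hv₁i hu₂i
    rw [hsplit]
    linarith
end

section
/- Let X₁, X₂ ⊆ ℝ^d be nonempty compact sets, c : X₁ × X₂ → ℝ continuous, and f, ξ : X₂ → ℝ continuous. Fix x₁ ∈ X₁ and suppose the function y ↦ c(x₁, y) − f(y) has a unique minimizer y₀ on X₂. Then the function F(ε) = inf_{y ∈ X₂} [c(x₁, y) − f(y) − ε ξ(y)] is differentiable at ε = 0 with F′(0) = −ξ(y₀); equivalently, lim_{ε → 0} ( (f + εξ)^c(x₁) − f^c(x₁) ) / ε = −ξ(y₀). -/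
/-- (Envelope differentiability of the c-transform.) For compact
`X₁, X₂ ⊆ ℝ^d`, a continuous cost `c` on `X₁ × X₂`, continuous `f, ξ` on `X₂`, a fixed
`x₁ ∈ X₁`, and a unique minimizer `y₀` of `y ↦ c(x₁,y) − f(y)` over `X₂`, the function
`F(ε) = inf_{y ∈ X₂} [c(x₁,y) − f(y) − ε ξ(y)]` is differentiable at `ε = 0` with
`F′(0) = −ξ(y₀)`. -/
theorem stmt19 {d : ℕ} (X₁ X₂ : Set (EuclideanSpace ℝ (Fin d)))
    (hX₁ne : X₁.Nonempty) (hX₂ne : X₂.Nonempty)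
    (hX₁c : IsCompact X₁) (hX₂c : IsCompact X₂)
    (c : EuclideanSpace ℝ (Fin d) → EuclideanSpace ℝ (Fin d) → ℝ)
    (hc : ContinuousOn (fun p : EuclideanSpace ℝ (Fin d) × EuclideanSpace ℝ (Fin d) =>
      c p.1 p.2) (X₁ ×ˢ X₂))
    (f ξ : EuclideanSpace ℝ (Fin d) → ℝ)
    (hf : ContinuousOn f X₂) (hξ : ContinuousOn ξ X₂)
    (x₁ : EuclideanSpace ℝ (Fin d)) (hx₁ : x₁ ∈ X₁)
    (y₀ : EuclideanSpace ℝ (Fin d)) (hy₀ : y₀ ∈ X₂)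
    (hmin : ∀ y ∈ X₂, c x₁ y₀ - f y₀ ≤ c x₁ y - f y)
    (huniq : ∀ y ∈ X₂, c x₁ y - f y = c x₁ y₀ - f y₀ → y = y₀) :
    HasDerivAt (fun ε : ℝ => ⨅ y : X₂, (c x₁ y - f y - ε * ξ y)) (-ξ y₀) 0 := by
  have hcx : ContinuousOn (fun y => c x₁ y) X₂ := by
    have := hc.comp (Continuous.continuousOn (continuous_const.prodMk continuous_id))
      (fun y hy => Set.mk_mem_prod hx₁ hy)
    exact this
  set g : EuclideanSpace ℝ (Fin d) → ℝ := fun y => c x₁ y - f y with hg_def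
  have hg : ContinuousOn g X₂ := hcx.sub hf
  obtain ⟨C, hC⟩ := hX₂c.exists_bound_of_continuousOn hξ
  have hC0 : 0 ≤ C := le_trans (norm_nonneg _) (hC y₀ hy₀)
  -- attained minimizer for each ε
  have : Nonempty ↑X₂ := hX₂ne.to_subtype
  have key : ∀ ε : ℝ, ∃ z ∈ X₂, (∀ y ∈ X₂, g z - ε * ξ z ≤ g y - ε * ξ y) ∧
      (⨅ y : X₂, (c x₁ y - f y - ε * ξ y)) = g z - ε * ξ z := by
    intro ε
    have hφ : ContinuousOn (fun y => g y - ε * ξ y) X₂ := hg.sub (hξ.const_smul ε)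
    obtain ⟨z, hzX, hz⟩ := hX₂c.exists_isMinOn hX₂ne hφ
    have hz' : ∀ y ∈ X₂, g z - ε * ξ z ≤ g y - ε * ξ y := fun y hy => hz hy
    refine ⟨z, hzX, hz', ?_⟩
    have hbdd : BddBelow (Set.range fun y : X₂ => c x₁ y - f y - ε * ξ y) := by
      refine ⟨g z - ε * ξ z, ?_⟩
      rintro _ ⟨y, rfl⟩
      exact hz' y y.2
    refine le_antisymm (ciInf_le hbdd ⟨z, hzX⟩) ?_
    exact le_ciInf fun y => hz' y y.2
  have hF0 : (⨅ y : X₂, (c x₁ ↑y - f ↑y)) = g y₀ := by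
    obtain ⟨z, hzX, hz, hval⟩ := key 0
    simp only [zero_mul, sub_zero] at hval
    rw [hval]
    have h1 : g y₀ ≤ g z := hmin z hzX
    have h2 : g z ≤ g y₀ := by simpa using hz y₀ hy₀
    simp [le_antisymm h2 h1]
  -- convergence of minimizers
  have hconv : ∀ δ > 0, ∃ η > 0, ∀ ε : ℝ, |ε| < η → ∀ z ∈ X₂,
      (∀ y ∈ X₂, g z - ε * ξ z ≤ g y - ε * ξ y) → dist z y₀ < δ := by
    intro δ hδ
    set K : Set (EuclideanSpace ℝ (Fin d)) := X₂ ∩ {y | δ ≤ dist y y₀} with hK_def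
    rcases K.eq_empty_or_nonempty with hKe | hKne
    · refine ⟨1, one_pos, fun ε _ z hz _ => ?_⟩
      by_contra h
      have : z ∈ K := ⟨hz, le_of_not_gt h⟩
      simp [hKe] at this
    · have hKc : IsCompact K := hX₂c.inter_right
        (isClosed_le continuous_const (continuous_id.dist continuous_const))
      obtain ⟨z₀, hz₀K, hz₀⟩ := hKc.exists_isMinOn hKne (hg.mono Set.inter_subset_left)
      set m : ℝ := g z₀ - g y₀ with hm_def
      have hm : 0 < m := by
        have h1 : g y₀ ≤ g z₀ := hmin z₀ hz₀K.1
        rcases lt_or_eq_of_le h1 with h | h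
        · linarith
        · exfalso
          have := huniq z₀ hz₀K.1 h.symm
          have hd : δ ≤ dist z₀ y₀ := hz₀K.2
          rw [this] at hd
          simp at hd
          linarith
      refine ⟨m / (2 * (C + 1)), by positivity, fun ε hε z hzX hzmin => ?_⟩
      by_contra hcon
      have hzK : z ∈ K := ⟨hzX, le_of_not_gt hcon⟩
      have h1 : g z₀ ≤ g z := hz₀ hzK
      have h2 : g z - ε * ξ z ≤ g y₀ - ε * ξ y₀ := hzmin y₀ hy₀
      have h3 : |ξ z| ≤ C := by simpa using hC z hzX
      have h4 : |ξ y₀| ≤ C := by simpa using hC y₀ hy₀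
      have h5 : ε * ξ z - ε * ξ y₀ ≤ |ε| * C + |ε| * C := by
        have := abs_mul ε (ξ z)
        have := abs_mul ε (ξ y₀)
        have a1 : ε * ξ z ≤ |ε| * C := le_trans (le_abs_self _)
          (by rw [abs_mul]; exact mul_le_mul_of_nonneg_left h3 (abs_nonneg _))
        have a2 : -(ε * ξ y₀) ≤ |ε| * C := le_trans (neg_le_abs _)
          (by rw [abs_mul]; exact mul_le_mul_of_nonneg_left h4 (abs_nonneg _))
        linarith
      have h6 : m ≤ ε * ξ z - ε * ξ y₀ := by
        have : g y₀ + m ≤ g z := by rw [hm_def]; linarith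
        linarith
      have h7 : |ε| * C + |ε| * C < m := by
        have h8 : |ε| * (2 * C) ≤ (m / (2 * (C + 1))) * (2 * C) := by
          apply mul_le_mul_of_nonneg_right (le_of_lt hε); positivity
        have h9 : (m / (2 * (C + 1))) * (2 * C) < m := by
          rw [div_mul_eq_mul_div, mul_comm]
          rw [div_lt_iff₀ (by positivity)]
          nlinarith
        nlinarith
      linarith
  -- main argument
  rw [hasDerivAt_iff_isLittleO, Asymptotics.isLittleO_iff]
  intro C' hC'
  have hξy₀ : ContinuousWithinAt ξ X₂ y₀ := hξ y₀ hy₀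
  rw [Metric.continuousWithinAt_iff] at hξy₀
  obtain ⟨δ, hδ, hδξ⟩ := hξy₀ C' hC'
  obtain ⟨η, hη, hηP⟩ := hconv δ hδ
  rw [Filter.eventually_iff_exists_mem]
  refine ⟨Metric.ball 0 η, Metric.ball_mem_nhds 0 hη, fun ε hε => ?_⟩
  obtain ⟨z, hzX, hzmin, hval⟩ := key ε
  have hεabs : |ε| < η := by simpa [Real.dist_eq] using hε
  have hdz : dist z y₀ < δ := hηP ε hεabs z hzX hzmin
  have hξz : |ξ z - ξ y₀| < C' := by
    have := hδξ hzX hdz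
    simpa [Real.dist_eq] using this
  have hupper : (⨅ y : X₂, (c x₁ y - f y - ε * ξ y)) ≤ g y₀ - ε * ξ y₀ := by
    rw [hval]; exact hzmin y₀ hy₀
  have hlower : g y₀ - ε * ξ z ≤ (⨅ y : X₂, (c x₁ y - f y - ε * ξ y)) := by
    rw [hval]
    have hgz : g y₀ ≤ g z := hmin z hzX
    linarith
  simp only [sub_zero, zero_mul, smul_eq_mul, Real.norm_eq_abs, hF0]
  rw [abs_le]
  constructor
  · have : ε * (ξ z - ξ y₀) ≤ |ε| * |ξ z - ξ y₀| := by
      rw [← abs_mul]; exact le_abs_self _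
    have hb : |ε| * |ξ z - ξ y₀| ≤ C' * |ε| := by
      rw [mul_comm]; exact mul_le_mul_of_nonneg_right (le_of_lt hξz) (abs_nonneg _)
    linarith [hlower]
  · linarith [hupper, mul_nonneg hC'.le (abs_nonneg ε)]
end
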